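/- Let K be a nonarchimedean field and let A be a Banach algebra over K whose underlying ring is Noetherian. Then every prime ideal of A is the kernel of some bounded multiplicative seminorm on A. -/

import Mathlib

/-!
Every ideal of a Noetherian Banach algebra is closed, so `A ⧸ p` is again a Noetherian Banach
algebra, now a domain, and it suffices to find a bounded multiplicative seminorm with trivial kernel
on such a domain `B`. There, by the open mapping theorem, multiplication by `x ≠ 0` is bounded
below: `minModulus x > 0`. Zorn's lemma gives a minimal element among the power-multiplicative
nonarchimedean seminorms `φ ≤ ‖·‖` with `minModulus x * φ y ≤ φ (x * y)` (the smoothing of the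
norm is one of them); minimality makes `φ` multiplicative, and `φ x ≥ minModulus x > 0` for `x ≠ 0`.
-/

open Filter Topology Matrix

/-- A bounded multiplicative (nonarchimedean) seminorm on a seminormed commutative ring. -/
structure IsBddMulSeminorm {A : Type*} [SeminormedCommRing A] (φ : A → ℝ) : Prop where
  nonneg : ∀ f, 0 ≤ φ f
  map_zero : φ 0 = 0
  map_one : φ 1 = 1
  map_neg : ∀ f, φ (-f) = φ f
  nonarch : ∀ f g, φ (f + g) ≤ max (φ f) (φ g)
  mul_eq : ∀ f g, φ (f * g) = φ f * φ g
  bounded : ∃ C > 0, ∀ f, φ f ≤ C * ‖f‖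

theorem Matrix.eventually_isUnit_det_one_sub (R n : Type*) [NormedCommRing R] [CompleteSpace R]
    [Fintype n] [DecidableEq n] : ∀ᶠ A in 𝓝 (0 : n → n → R), IsUnit (1 - Matrix.of A).det := by
  have hcont : Continuous fun A : n → n → R => (1 - Matrix.of A).det :=
    (continuous_const.sub (continuous_matrix fun i j => by fun_prop)).matrix_det
  exact hcont.continuousAt.eventually (Units.isOpen.mem_nhds (by simp))

theorem Matrix.mem_ideal_of_mulVec_mem {R n : Type*} [CommRing R] [Fintype n] [DecidableEq n]
    {I : Ideal R} {M : Matrix n n R} (hM : IsUnit M.det) {v : n → R} (hv : ∀ i, (M *ᵥ v) i ∈ I)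
    (i : n) : v i ∈ I := by
  rw [← Matrix.one_mulVec v, ← Matrix.nonsing_inv_mul M hM, ← Matrix.mulVec_mulVec]
  exact Ideal.sum_mem I fun j _ => I.mul_mem_left _ (hv j)

section ClosedIdeal

variable (K : Type*) {R : Type*} [NontriviallyNormedField K] [NormedCommRing R]
  [NormedAlgebra K R] [CompleteSpace R]
include K

/-- The open mapping theorem for `a ↦ a ⬝ᵥ h`. -/
theorem Ideal.exists_dotProduct_eq_of_span_eq {ι : Type*} [Fintype ι] {J : Ideal R}
    [IsClosed (J : Set R)] {h : ι → R} (hspan : Ideal.span (Set.range h) = J) :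
    ∃ C > 0, ∀ y ∈ J, ∃ a : ι → R, a ⬝ᵥ h = y ∧ ‖a‖ ≤ C * ‖y‖ := by
  let T : (ι → R) →L[K] R := ∑ i, (ContinuousLinearMap.mul K R).flip (h i) ∘L .proj i
  have hT : ∀ a, T a = a ⬝ᵥ h := fun a => by simp [T, dotProduct, mul_comm]
  have hTJ : ∀ a, T a ∈ J.restrictScalars K := fun a => by
    rw [hT, ← hspan]
    exact Ideal.sum_mem _ fun i _ => Ideal.mul_mem_left _ _ (Ideal.subset_span ⟨i, rfl⟩)
  have : IsClosed ((J.restrictScalars K : Submodule K R) : Set R) := ‹_›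
  have hsurj : Function.Surjective (T.codRestrict _ hTJ) := by
    rintro ⟨y, hy⟩
    obtain ⟨a, ha⟩ := (Submodule.mem_span_range_iff_exists_fun R).mp (hspan ▸ hy : y ∈ _)
    exact ⟨a, Subtype.ext (by simpa [hT, dotProduct] using ha)⟩
  obtain ⟨C, hC, hpre⟩ := (T.codRestrict _ hTJ).exists_preimage_norm_le hsurj
  refine ⟨C, hC, fun y hy => ?_⟩
  obtain ⟨a, ha, hnorm⟩ := hpre ⟨y, hy⟩
  exact ⟨a, (hT a).symm.trans (congrArg Subtype.val ha), hnorm⟩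

/-- The closure `J` of `I` is finitely generated, say by `h`. Perturbing the generators to
`g ∈ I` gives `h - g = A *ᵥ h` with `A` small, so `(1 - A) *ᵥ h = g` with `1 - A` invertible,
whence `h ∈ I` and `J = I`. -/
theorem Ideal.isClosed_of_isNoetherianRing [IsNoetherianRing R] (I : Ideal R) :
    IsClosed (I : Set R) := by
  obtain ⟨n, h, hspan⟩ := Submodule.fg_iff_exists_fin_generating_family.mp
    (IsNoetherian.noetherian I.closure)
  have : IsClosed (I.closure : Set R) := by rw [Ideal.coe_closure]; exact isClosed_closure
  obtain ⟨C, hC, hpre⟩ := Ideal.exists_dotProduct_eq_of_span_eq K hspan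
  obtain ⟨δ, hδ, hunit⟩ :=
    Metric.eventually_nhds_iff.mp (Matrix.eventually_isUnit_det_one_sub R (Fin n))
  have hJ : ∀ i, h i ∈ I.closure := fun i => hspan ▸ Ideal.subset_span ⟨i, rfl⟩
  have happrox : ∀ i, ∃ g ∈ I, ‖h i - g‖ < δ / C := fun i => by
    have := Metric.mem_closure_iff.mp (I.coe_closure ▸ hJ i : h i ∈ closure (I : Set R))
      (δ / C) (by positivity)
    simpa [dist_eq_norm] using this
  choose g hgI hg using happrox
  have hrows : ∀ i, ∃ a : Fin n → R, a ⬝ᵥ h = h i - g i ∧ ‖a‖ < δ := fun i => by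
    obtain ⟨a, ha, hnorm⟩ := hpre _ (sub_mem (hJ i) (I.coe_closure ▸ subset_closure (hgI i)))
    refine ⟨a, ha, hnorm.trans_lt ?_⟩
    rw [← lt_div_iff₀' hC]
    exact hg i
  choose A hA hAδ using hrows
  have hsmall : IsUnit (1 - Matrix.of A).det :=
    hunit (by simpa [dist_zero_right] using (pi_norm_lt_iff hδ).mpr hAδ)
  have hmul : (1 - Matrix.of A) *ᵥ h = g := by
    ext i
    simp only [Matrix.sub_mulVec, Matrix.one_mulVec, Pi.sub_apply]
    rw [show (Matrix.of A *ᵥ h) i = A i ⬝ᵥ h from rfl, hA i, sub_sub_cancel]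
  have hhI : ∀ i, h i ∈ I := Matrix.mem_ideal_of_mulVec_mem hsmall (by simpa [hmul] using hgI)
  refine isClosed_of_closure_subset ?_
  rw [← Ideal.coe_closure, ← hspan]
  exact Ideal.span_le.mpr (Set.range_subset_iff.mpr hhI)

end ClosedIdeal

section MinModulus

variable {B : Type*} [NormedCommRing B]

noncomputable def minModulus (x : B) : ℝ :=
  ⨅ b : {b : B // b ≠ 0}, ‖x * b‖ / ‖(b : B)‖

theorem minModulus_nonneg (x : B) : 0 ≤ minModulus x :=
  Real.iInf_nonneg fun _ => by positivity

theorem minModulus_mul_norm_le (x y : B) : minModulus x * ‖y‖ ≤ ‖x * y‖ := by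
  rcases eq_or_ne y 0 with rfl | hy
  · simp
  have hbdd : BddBelow (Set.range fun b : {b : B // b ≠ 0} => ‖x * b‖ / ‖(b : B)‖) :=
    ⟨0, by rintro _ ⟨b, rfl⟩; positivity⟩
  exact (le_div_iff₀ (norm_pos_iff.mpr hy)).mp (ciInf_le hbdd ⟨y, hy⟩)

theorem minModulus_pow_mul_norm_le (x y : B) (n : ℕ) :
    minModulus x ^ n * ‖y‖ ≤ ‖x ^ n * y‖ := by
  induction n with
  | zero => simp
  | succ n ih =>
    calc minModulus x ^ (n + 1) * ‖y‖ = minModulus x * (minModulus x ^ n * ‖y‖) := by ring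
      _ ≤ minModulus x * ‖x ^ n * y‖ := by gcongr; exact minModulus_nonneg x
      _ ≤ ‖x * (x ^ n * y)‖ := minModulus_mul_norm_le _ _
      _ = ‖x ^ (n + 1) * y‖ := by rw [pow_succ', mul_assoc]

end MinModulus

section Admissible

variable {B : Type*} [NormedCommRing B]

structure IsAdmissibleSeminorm (φ : B → ℝ) : Prop where
  nonneg : ∀ x, 0 ≤ φ x
  map_one : φ 1 = 1
  le_norm : ∀ x, φ x ≤ ‖x‖
  nonarch : ∀ x y, φ (x + y) ≤ max (φ x) (φ y)
  mul_le : ∀ x y, φ (x * y) ≤ φ x * φ y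
  isPowMul : IsPowMul φ
  minModulus_mul_le : ∀ x y, minModulus x * φ y ≤ φ (x * y)

namespace IsAdmissibleSeminorm

section

variable {φ : B → ℝ} (hφ : IsAdmissibleSeminorm φ)
include hφ

theorem map_zero : φ 0 = 0 :=
  le_antisymm (by simpa using hφ.le_norm 0) (hφ.nonneg 0)

theorem map_neg (x : B) : φ (-x) = φ x := by
  refine (pow_left_inj₀ (hφ.nonneg _) (hφ.nonneg _) two_ne_zero).mp ?_
  rw [← hφ.isPowMul _ one_le_two, ← hφ.isPowMul _ one_le_two, neg_sq]

def toRingSeminorm : RingSeminorm B where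
  toFun := φ
  map_zero' := hφ.map_zero
  add_le' x y := (hφ.nonarch x y).trans (max_le_add_of_nonneg (hφ.nonneg x) (hφ.nonneg y))
  neg' := hφ.map_neg
  mul_le' := hφ.mul_le

theorem seminormFromConst {c : B} (hc : φ c ≠ 0) :
    IsAdmissibleSeminorm (seminormFromConst' c hφ.toRingSeminorm) := by
  have h1 : hφ.toRingSeminorm 1 ≤ 1 := hφ.map_one.le
  have hpm : IsPowMul hφ.toRingSeminorm := hφ.isPowMul
  have hle := seminormFromConst_le_seminorm h1 hc hpm
  refine ⟨fun x => apply_nonneg (_root_.seminormFromConst h1 hc hpm) x,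
    seminormFromConst_one h1 hc hpm, fun x => (hle x).trans (hφ.le_norm x),
    seminormFromConst_isNonarchimedean h1 hc hpm hφ.nonarch,
    map_mul_le_mul (_root_.seminormFromConst h1 hc hpm),
    seminormFromConst_isPowMul h1 hc hpm, fun x y => ?_⟩
  refine le_ciInf fun n => ?_
  calc minModulus x * seminormFromConst' c hφ.toRingSeminorm y
      ≤ minModulus x * seminormFromConst_seq c hφ.toRingSeminorm y n :=
        mul_le_mul_of_nonneg_left (ciInf_le (seminormFromConst_bddBelow _ _ y) n)
          (minModulus_nonneg x)
    _ ≤ seminormFromConst_seq c hφ.toRingSeminorm (x * y) n := by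
        rw [seminormFromConst_seq, seminormFromConst_seq, mul_div_assoc', mul_assoc]
        exact div_le_div_of_nonneg_right (hφ.minModulus_mul_le x _) (by positivity)

end

theorem iInf_of_isChain {c : Set (B → ℝ)} (hc : IsChain (· ≤ ·) c) [Nonempty c]
    (hadm : ∀ ψ ∈ c, IsAdmissibleSeminorm ψ) :
    IsAdmissibleSeminorm fun x => ⨅ ψ : c, (ψ : B → ℝ) x := by
  set Φ : B → ℝ := fun x => ⨅ ψ : c, (ψ : B → ℝ) x
  obtain ⟨ψ₀⟩ := ‹Nonempty c›
  have hnonneg : ∀ x, 0 ≤ Φ x := fun x => Real.iInf_nonneg fun ψ => (hadm ψ ψ.2).nonneg x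
  have hle : ∀ (ψ : c) x, Φ x ≤ (ψ : B → ℝ) x := fun ψ x =>
    ciInf_le ⟨0, by rintro _ ⟨ψ, rfl⟩; exact (hadm ψ ψ.2).nonneg x⟩ ψ
  have hdir : ∀ ψ₁ ψ₂ : c, ∃ ψ : c, (ψ : B → ℝ) ≤ ψ₁ ∧ (ψ : B → ℝ) ≤ ψ₂ := fun ψ₁ ψ₂ => by
    rcases hc.total ψ₁.2 ψ₂.2 with h | h
    · exact ⟨ψ₁, le_rfl, h⟩
    · exact ⟨ψ₂, h, le_rfl⟩
  have hmul : ∀ x y, Φ (x * y) ≤ Φ x * Φ y := fun x y => by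
    rw [Real.iInf_mul_of_nonneg (hnonneg y)]
    refine le_ciInf fun ψ₁ => ?_
    rw [Real.mul_iInf_of_nonneg ((hadm ψ₁ ψ₁.2).nonneg x)]
    refine le_ciInf fun ψ₂ => ?_
    obtain ⟨ψ, hψ₁, hψ₂⟩ := hdir ψ₁ ψ₂
    calc Φ (x * y) ≤ (ψ : B → ℝ) (x * y) := hle ψ _
      _ ≤ (ψ : B → ℝ) x * (ψ : B → ℝ) y := (hadm ψ ψ.2).mul_le x y
      _ ≤ (ψ₁ : B → ℝ) x * (ψ₂ : B → ℝ) y :=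
        mul_le_mul (hψ₁ x) (hψ₂ y) ((hadm ψ ψ.2).nonneg y) ((hadm ψ₁ ψ₁.2).nonneg x)
  refine ⟨hnonneg, ?_, fun x => (hle ψ₀ x).trans ((hadm ψ₀ ψ₀.2).le_norm x), fun x y => ?_, hmul,
    fun x n hn => ?_, fun x y => ?_⟩
  · exact (congrArg iInf (funext fun ψ : c => (hadm ψ ψ.2).map_one)).trans ciInf_const
  · by_contra! h
    obtain ⟨ψ₁, h₁⟩ := exists_lt_of_ciInf_lt ((le_max_left _ _).trans_lt h)
    obtain ⟨ψ₂, h₂⟩ := exists_lt_of_ciInf_lt ((le_max_right _ _).trans_lt h)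
    obtain ⟨ψ, hψ₁, hψ₂⟩ := hdir ψ₁ ψ₂
    exact ((hle ψ _).trans ((hadm ψ ψ.2).nonarch x y)).not_gt
      (max_lt ((hψ₁ x).trans_lt h₁) ((hψ₂ y).trans_lt h₂))
  · refine le_antisymm ?_ (le_ciInf fun ψ => ?_)
    · induction n, hn using Nat.le_induction with
      | base => simp
      | succ n hn ih =>
        rw [pow_succ, pow_succ]
        exact (hmul _ _).trans (mul_le_mul_of_nonneg_right ih (hnonneg x))
    · rw [(hadm ψ ψ.2).isPowMul x hn]
      exact pow_le_pow_left₀ (hnonneg x) (hle ψ x) n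
  · exact le_ciInf fun ψ => (mul_le_mul_of_nonneg_left (hle ψ y) (minModulus_nonneg x)).trans
      ((hadm ψ ψ.2).minModulus_mul_le x y)

theorem smoothingFun_norm [NormOneClass B] [IsUltrametricDist B] :
    IsAdmissibleSeminorm (smoothingFun (normRingSeminorm B)) := by
  set μ := normRingSeminorm B
  have hμ1 : μ 1 ≤ 1 := norm_one.le
  have hna : IsNonarchimedean μ := IsUltrametricDist.isNonarchimedean_norm
  refine ⟨smoothingFun_nonneg μ hμ1, ?_, smoothingFun_le_self μ,
    isNonarchimedean_smoothingFun μ hμ1 hna, map_mul_le_mul (smoothingSeminorm μ hμ1 hna),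
    isPowMul_smoothingFun μ hμ1, fun x y => ?_⟩
  · have hpow : ∀ n, 1 ≤ n → μ (1 ^ n) = μ 1 ^ n := fun n _ =>
      show ‖(1 : B) ^ n‖ = ‖(1 : B)‖ ^ n by simp
    exact (smoothingFun_of_powMul μ hμ1 hpow).trans norm_one
  refine le_ciInf fun n => ?_
  have hn : (n : ℕ) ≠ 0 := n.ne_zero
  have hm := minModulus_nonneg x
  calc minModulus x * smoothingFun μ y ≤ minModulus x * μ (y ^ (n : ℕ)) ^ (1 / (n : ℝ)) :=
        mul_le_mul_of_nonneg_left (smoothingFun_le μ y n) hm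
    _ = (minModulus x ^ (n : ℕ) * μ (y ^ (n : ℕ))) ^ (1 / (n : ℝ)) := by
        rw [Real.mul_rpow (by positivity) (apply_nonneg _ _), one_div,
          Real.pow_rpow_inv_natCast hm hn]
    _ ≤ μ ((x * y) ^ (n : ℕ)) ^ (1 / (n : ℝ)) := by
        gcongr
        rw [mul_pow]
        exact minModulus_pow_mul_norm_le x _ n

theorem exists_minimal [NormOneClass B] [IsUltrametricDist B] :
    ∃ φ : B → ℝ, Minimal IsAdmissibleSeminorm φ := by
  have hchains : ∀ c ⊆ {φ : (B → ℝ)ᵒᵈ | IsAdmissibleSeminorm φ}, IsChain (· ≤ ·) c →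
      ∀ ψ ∈ c, ∃ lb ∈ {φ : (B → ℝ)ᵒᵈ | IsAdmissibleSeminorm φ}, ∀ ψ' ∈ c, ψ' ≤ lb := by
    intro c hc hchain ψ hψ
    refine ⟨_, @iInf_of_isChain B _ c hchain.symm ⟨⟨ψ, hψ⟩⟩ hc, fun ψ' hψ' x => ?_⟩
    refine ciInf_le (f := fun φ : c => OrderDual.ofDual φ.1 x) ⟨0, ?_⟩ ⟨ψ', hψ'⟩
    rintro _ ⟨ψ'', rfl⟩
    exact (hc ψ''.2).nonneg x
  obtain ⟨φ, -, hφ⟩ := zorn_le_nonempty₀ _ hchains _ smoothingFun_norm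
  exact ⟨φ, hφ⟩

end IsAdmissibleSeminorm

end Admissible

section Domain

variable (K : Type*) {B : Type*} [NontriviallyNormedField K] [NormedCommRing B] [NormedAlgebra K B]
  [CompleteSpace B] [IsNoetherianRing B] [IsDomain B]
include K

theorem exists_norm_le_mul_norm_mul {x : B} (hx : x ≠ 0) :
    ∃ C > 0, ∀ b, ‖b‖ ≤ C * ‖x * b‖ := by
  have : IsClosed (Ideal.span {x} : Set B) := Ideal.isClosed_of_isNoetherianRing K _
  obtain ⟨C, hC, hpre⟩ :=
    Ideal.exists_dotProduct_eq_of_span_eq K (h := fun _ : Unit => x) (by rw [Set.range_const])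
  refine ⟨C, hC, fun b => ?_⟩
  obtain ⟨a, ha, hnorm⟩ := hpre (x * b) (Ideal.mul_mem_right _ _ (Ideal.mem_span_singleton_self x))
  have hab : a () = b := mul_left_cancel₀ hx (by simpa [dotProduct, mul_comm] using ha)
  calc ‖b‖ = ‖a ()‖ := by rw [hab]
    _ ≤ ‖a‖ := norm_le_pi_norm a ()
    _ ≤ C * ‖x * b‖ := hnorm

theorem minModulus_pos {x : B} (hx : x ≠ 0) : 0 < minModulus x := by
  obtain ⟨C, hC, hbound⟩ := exists_norm_le_mul_norm_mul K hx
  have : Nonempty {b : B // b ≠ 0} := ⟨⟨1, one_ne_zero⟩⟩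
  refine (inv_pos.mpr hC).trans_le (le_ciInf fun b => ?_)
  rw [le_div_iff₀ (norm_pos_iff.mpr b.2), inv_mul_le_iff₀ hC]
  exact hbound b

theorem IsAdmissibleSeminorm.pos_of_ne_zero {φ : B → ℝ} (hφ : IsAdmissibleSeminorm φ) {x : B}
    (hx : x ≠ 0) : 0 < φ x := by
  have h := hφ.minModulus_mul_le x 1
  rw [hφ.map_one, mul_one, mul_one] at h
  exact (minModulus_pos K hx).trans_le h

/-- The seminorm `y ↦ lim φ (y * x ^ n) / φ x ^ n` is admissible, below `φ`, and multiplicative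
at `x`; minimality forces it to be `φ`. -/
theorem IsAdmissibleSeminorm.map_mul_of_minimal {φ : B → ℝ} (hφ : Minimal IsAdmissibleSeminorm φ)
    (x y : B) : φ (x * y) = φ x * φ y := by
  rcases eq_or_ne x 0 with rfl | hx
  · simp [hφ.prop.map_zero]
  have hc : hφ.prop.toRingSeminorm x ≠ 0 := (hφ.prop.pos_of_ne_zero K hx).ne'
  have h1 : hφ.prop.toRingSeminorm 1 ≤ 1 := hφ.prop.map_one.le
  have heq : seminormFromConst' x hφ.prop.toRingSeminorm = φ :=
    hφ.eq_of_le (hφ.prop.seminormFromConst hc)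
      (seminormFromConst_le_seminorm h1 hc hφ.prop.isPowMul)
  rw [← heq]
  exact seminormFromConst_const_mul h1 hc hφ.prop.isPowMul y

theorem exists_isBddMulSeminorm_eq_zero_iff [NormOneClass B] [IsUltrametricDist B] :
    ∃ φ : B → ℝ, IsBddMulSeminorm φ ∧ ∀ x, φ x = 0 ↔ x = 0 := by
  obtain ⟨φ, hφ⟩ := IsAdmissibleSeminorm.exists_minimal (B := B)
  refine ⟨φ, ⟨hφ.prop.nonneg, hφ.prop.map_zero, hφ.prop.map_one, hφ.prop.map_neg,
    hφ.prop.nonarch, IsAdmissibleSeminorm.map_mul_of_minimal K hφ,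
    1, one_pos, fun x => (one_mul ‖x‖).symm ▸ hφ.prop.le_norm x⟩, fun x => ?_⟩
  refine ⟨fun h => ?_, fun h => h ▸ hφ.prop.map_zero⟩
  by_contra hx
  exact (hφ.prop.pos_of_ne_zero K hx).ne' h

end Domain

theorem IsBddMulSeminorm.comp {A B : Type*} [SeminormedCommRing A] [SeminormedCommRing B]
    {φ : B → ℝ} (hφ : IsBddMulSeminorm φ) (f : A →+* B) (hf : ∀ a, ‖f a‖ ≤ ‖a‖) :
    IsBddMulSeminorm (φ ∘ f) := by
  obtain ⟨C, hC, hbound⟩ := hφ.bounded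
  refine ⟨fun a => hφ.nonneg _, ?_, ?_, fun a => ?_, fun a b => ?_, fun a b => ?_,
    C, hC, fun a => (hbound _).trans (by gcongr; exact hf a)⟩ <;>
    simp [hφ.map_zero, hφ.map_one, hφ.map_neg, hφ.nonarch, hφ.mul_eq]

instance Ideal.Quotient.isUltrametricDist {R : Type*} [SeminormedCommRing R] [IsUltrametricDist R]
    (I : Ideal R) : IsUltrametricDist (R ⧸ I) := by
  refine IsUltrametricDist.isUltrametricDist_of_isNonarchimedean_norm fun x y => ?_
  refine le_of_forall_pos_le_add fun ε hε => ?_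
  obtain ⟨a, rfl, ha⟩ := Ideal.Quotient.norm_mk_lt x hε
  obtain ⟨b, rfl, hb⟩ := Ideal.Quotient.norm_mk_lt y hε
  calc ‖Ideal.Quotient.mk I a + Ideal.Quotient.mk I b‖ ≤ ‖a + b‖ := by
        rw [← map_add]; exact Ideal.Quotient.norm_mk_le I _
    _ ≤ max ‖a‖ ‖b‖ := IsUltrametricDist.norm_add_le_max a b
    _ ≤ max (‖Ideal.Quotient.mk I a‖ + ε) (‖Ideal.Quotient.mk I b‖ + ε) := max_le_max ha.le hb.le
    _ = _ := max_add_add_right _ _ _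

instance Ideal.Quotient.normOneClass {R : Type*} [NormedCommRing R] [NormOneClass R] (I : Ideal R)
    [IsClosed (I : Set R)] [Nontrivial (R ⧸ I)] : NormOneClass (R ⧸ I) :=
  ⟨le_antisymm (by simpa using Ideal.Quotient.norm_mk_le I 1) (one_le_norm_one _)⟩

theorem prime_is_kernel_of_bddMulSeminorm {K A : Type*}
    [NontriviallyNormedField K]
    [NormedCommRing A] [NormOneClass A] [NormedAlgebra K A] [CompleteSpace A]
    (hA : IsNonarchimedean (fun a : A => ‖a‖))
    [IsNoetherianRing A] :
    ∀ p : Ideal A, p.IsPrime →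
      ∃ φ : A → ℝ, IsBddMulSeminorm φ ∧ ∀ f, f ∈ p ↔ φ f = 0 := by
  intro p hp
  have : IsUltrametricDist A := IsUltrametricDist.isUltrametricDist_of_isNonarchimedean_norm hA
  have : IsClosed (p : Set A) := Ideal.isClosed_of_isNoetherianRing K p
  obtain ⟨φ, hφ, hker⟩ := exists_isBddMulSeminorm_eq_zero_iff K (B := A ⧸ p)
  refine ⟨φ ∘ Ideal.Quotient.mk p, hφ.comp _ (Ideal.Quotient.norm_mk_le p), fun f => ?_⟩
  rw [Function.comp_apply, hker, Ideal.Quotient.eq_zero_iff_mem]
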